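/- arXiv:2204.10950 — 2 statements merged into one kernel-verified Lean document; each statement's English description precedes it below -/
import Mathlib

section
/- Let B be a sixth-power-free integer and P = (x,y) a non-torsion integral point on y² = x³ + B such that [2]P is integral. Then |y|³ divides 27·B², and consequently |x|³ < 10·|B|^{4/3}. -/
/-- The Mordell curve `y² = x³ + B` as a Weierstrass curve over `ℚ`. -/
def Mordell (B : ℚ) : WeierstrassCurve.Affine ℚ :=
  { a₁ := 0, a₂ := 0, a₃ := 0, a₄ := 0, a₆ := B }

/-- `B` is sixth-power-free: no sixth power of a prime divides it. -/
def SixthPowerFree (B : ℤ) : Prop := ∀ p : ℕ, p.Prime → ¬ ((p : ℤ) ^ 6 ∣ B)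

/-- A rational point on the Mordell curve is integral if it is affine with
integer coordinates. -/
def IsIntegralPoint {B : ℚ} (P : (Mordell B).Point) : Prop :=
  ∃ (x y : ℚ) (h : (Mordell B).Nonsingular x y),
    P = WeierstrassCurve.Affine.Point.some _ _ h ∧ x.den = 1 ∧ y.den = 1

/-!
Doubling `P = (x, y)` gives `x([2]P) + 2x = λ²` with tangent slope `λ = 3x² / 2y`, so if `[2]P`
is integral then `λ² ∈ ℤ`, hence `λ ∈ ℤ` and `y ∣ 3x²`. Since `3B = 3y² - 3x³` this gives
`y ∣ 3B`, and `y³ ∣ 27B²` follows from an explicit identity. For the size bound,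
`|x|³ ≤ y² + |B|` and `y² ≤ (27B²)^{2/3} = 9|B|^{4/3}`.
-/

open WeierstrassCurve.Affine

namespace Mordell

variable {B x y : ℚ}

lemma equation_iff : (Mordell B).Equation x y ↔ y ^ 2 = x ^ 3 + B := by
  simp [WeierstrassCurve.Affine.equation_iff, Mordell]

lemma negY_eq : (Mordell B).negY x y = -y := by
  simp [WeierstrassCurve.Affine.negY, Mordell]

lemma two_zsmul_some_eq_zero (h : (Mordell B).Nonsingular x y) (hy : y = 0) :
    (2 : ℤ) • Point.some _ _ h = 0 := by
  rw [two_zsmul]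
  exact Point.add_self_of_Y_eq (by rw [negY_eq, hy, neg_zero])

lemma x_two_zsmul_add_two_mul {x₂ y₂ : ℚ} (h : (Mordell B).Nonsingular x y)
    (h₂ : (Mordell B).Nonsingular x₂ y₂) (hy : y ≠ 0)
    (hP : (2 : ℤ) • Point.some _ _ h = Point.some _ _ h₂) :
    x₂ + 2 * x = (3 * x ^ 2 / (2 * y)) ^ 2 := by
  have hne : y ≠ (Mordell B).negY x y := by
    rw [negY_eq]
    contrapose! hy
    linarith
  rw [two_zsmul, Point.add_self_of_Y_ne hne] at hP
  rw [← (Point.some.inj hP).1, slope_of_Y_ne rfl hne, negY_eq]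
  simp only [addX, Mordell]
  ring

end Mordell

lemma Int.dvd_of_sq_div_eq_intCast {a b n : ℤ} (hb : b ≠ 0) (h : ((a : ℚ) / b) ^ 2 = n) :
    b ∣ a := by
  have hb' : (b : ℚ) ≠ 0 := Int.cast_ne_zero.mpr hb
  rw [div_pow, div_eq_iff (pow_ne_zero 2 hb')] at h
  exact (Int.pow_dvd_pow_iff two_ne_zero).mp ⟨n, by exact_mod_cast h.trans (mul_comm _ _)⟩

/-- Modulo `y` we have `3B ≡ -3x³ ≡ 0`, and `27B² = (3x²)³ - 27y⁴ + 18 (3B) y²`. -/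
lemma cube_dvd_of_dvd_three_mul_sq {x y B : ℤ} (heq : y ^ 2 = x ^ 3 + B) (hdvd : y ∣ 3 * x ^ 2) :
    y ^ 3 ∣ 27 * B ^ 2 := by
  have h3B : y ∣ 3 * B := by
    rw [show 3 * B = y * (3 * y) - 3 * x ^ 2 * x by linear_combination -3 * heq]
    exact (dvd_mul_right _ _).sub (hdvd.mul_right x)
  obtain ⟨s, hs⟩ := hdvd
  obtain ⟨t, ht⟩ := h3B
  exact ⟨s ^ 3 - 27 * y + 18 * t, by
    linear_combination (9 * x ^ 4 + 3 * x ^ 2 * y * s + y ^ 2 * s ^ 2) * hs + 18 * y ^ 2 * ht +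
      27 * (y ^ 2 - B + x ^ 3) * heq⟩

lemma sq_le_nine_mul_rpow {t b : ℝ} (hb : 0 ≤ b) (ht : |t| ^ 3 ≤ 27 * b ^ 2) :
    t ^ 2 ≤ 9 * b ^ ((4 : ℝ) / 3) := by
  have hcube : (9 * b ^ ((4 : ℝ) / 3)) ^ 3 = 729 * b ^ 4 := by
    rw [mul_pow, ← Real.rpow_mul_natCast hb]
    norm_num
  rw [← pow_le_pow_iff_left₀ (sq_nonneg t) (by positivity) three_ne_zero, hcube]
  calc (t ^ 2) ^ 3 = (|t| ^ 3) ^ 2 := by rw [← sq_abs t]; ring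
    _ ≤ (27 * b ^ 2) ^ 2 := pow_le_pow_left₀ (by positivity) ht 2
    _ = 729 * b ^ 4 := by ring

lemma abs_pow_three_lt_ten_mul_rpow {x y B : ℤ} (hB : B ≠ 0) (heq : y ^ 2 = x ^ 3 + B)
    (hdvd : |y| ^ 3 ∣ 27 * B ^ 2) : |(x : ℝ)| ^ 3 < 10 * |(B : ℝ)| ^ ((4 : ℝ) / 3) := by
  have hy : |y| ^ 3 ≤ 27 * B ^ 2 := Int.le_of_dvd (by positivity) hdvd
  have hx : |x| ^ 3 ≤ y ^ 2 + |B| := by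
    rw [← abs_pow, show x ^ 3 = y ^ 2 + -B by linarith, ← abs_neg B]
    exact (abs_add_le _ _).trans (by rw [abs_of_nonneg (sq_nonneg y)])
  rcases (Int.one_le_abs hB).eq_or_lt with hB1 | hB2
  · -- Here `y² + |B| ≤ 10` is not a strict bound; integrality of `x` gives `|x| ≤ 2`.
    have hy3 : |y| < 4 := by
      refine lt_of_pow_lt_pow_left₀ 3 (by norm_num) ?_
      nlinarith [sq_abs B]
    have hx3 : |x| < 3 := by
      refine lt_of_pow_lt_pow_left₀ 3 (by norm_num) ?_
      nlinarith [sq_abs y, abs_nonneg y]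
    have hx2 : |(x : ℝ)| ≤ 2 := by exact_mod_cast (show |x| ≤ 2 by omega)
    have hBr : |(B : ℝ)| = 1 := by exact_mod_cast hB1.symm
    rw [hBr, Real.one_rpow]
    nlinarith [pow_le_pow_left₀ (abs_nonneg _) hx2 3]
  · have hBr : (2 : ℝ) ≤ |(B : ℝ)| := by exact_mod_cast hB2
    have hyr : (y : ℝ) ^ 2 ≤ 9 * |(B : ℝ)| ^ ((4 : ℝ) / 3) :=
      sq_le_nine_mul_rpow (abs_nonneg _) (by exact_mod_cast (sq_abs B).symm ▸ hy)
    have hBB : |(B : ℝ)| < |(B : ℝ)| ^ ((4 : ℝ) / 3) := by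
      conv_lhs => rw [← Real.rpow_one |(B : ℝ)|]
      exact Real.rpow_lt_rpow_of_exponent_lt (by linarith) (by norm_num)
    have hxr : |(x : ℝ)| ^ 3 ≤ (y : ℝ) ^ 2 + |(B : ℝ)| := by exact_mod_cast hx
    linarith

theorem stmt_2_general (B x y : ℤ) (hB : B ≠ 0)
    (h : (Mordell B).Nonsingular (x : ℚ) (y : ℚ))
    (htor : ∀ n : ℤ, n ≠ 0 → n • WeierstrassCurve.Affine.Point.some _ _ h ≠ 0)
    (h2 : IsIntegralPoint ((2 : ℤ) • WeierstrassCurve.Affine.Point.some _ _ h)) :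
    |y| ^ 3 ∣ 27 * B ^ 2 ∧
      |(x : ℝ)| ^ 3 < 10 * |(B : ℝ)| ^ ((4 : ℝ) / 3) := by
  have heq : y ^ 2 = x ^ 3 + B := by exact_mod_cast Mordell.equation_iff.mp h.1
  have hy : y ≠ 0 := fun hy ↦
    htor 2 two_ne_zero (Mordell.two_zsmul_some_eq_zero h (by exact_mod_cast hy))
  obtain ⟨x₂, y₂, h₂, hP, hx₂, -⟩ := h2
  have hslope : 2 * y ∣ 3 * x ^ 2 := by
    refine Int.dvd_of_sq_div_eq_intCast (mul_ne_zero two_ne_zero hy) (n := x₂.num + 2 * x) ?_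
    push_cast
    rw [Rat.coe_int_num_of_den_eq_one hx₂,
      Mordell.x_two_zsmul_add_two_mul h h₂ (by exact_mod_cast hy) hP]
  have hdvd : |y| ^ 3 ∣ 27 * B ^ 2 := by
    rw [← abs_pow, abs_dvd]
    exact cube_dvd_of_dvd_three_mul_sq heq (dvd_of_mul_left_dvd hslope)
  exact ⟨hdvd, abs_pow_three_lt_ten_mul_rpow hB heq hdvd⟩

theorem stmt_2 (B x y : ℤ) (hB : B ≠ 0) (hB6 : SixthPowerFree B)
    (h : (Mordell B).Nonsingular (x : ℚ) (y : ℚ))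
    (htor : ∀ n : ℤ, n ≠ 0 → n • WeierstrassCurve.Affine.Point.some _ _ h ≠ 0)
    (h2 : IsIntegralPoint ((2 : ℤ) • WeierstrassCurve.Affine.Point.some _ _ h)) :
    |y| ^ 3 ∣ 27 * B ^ 2 ∧
      |(x : ℝ)| ^ 3 < 10 * |(B : ℝ)| ^ ((4 : ℝ) / 3) :=
  stmt_2_general B x y hB h htor h2
end

section
/- Let X and B be coprime integers with X ≡ −B (mod 3) and 3 ∤ X. Then ord_3(7X² − XB + B²) ∈ {2, 3}. -/
lemma padicValInt_eq_or_eq_succ_of_dvd_of_not_dvd {p k : ℕ} [Fact p.Prime] {m : ℤ}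
    (hdvd : (p : ℤ) ^ k ∣ m) (hndvd : ¬ (p : ℤ) ^ (k + 2) ∣ m) :
    padicValInt p m = k ∨ padicValInt p m = k + 1 := by
  have hm : m ≠ 0 := by rintro rfl; exact hndvd (dvd_zero _)
  have hle : k ≤ padicValInt p m := ((padicValInt_dvd_iff k m).mp hdvd).resolve_left hm
  have hlt : ¬ k + 2 ≤ padicValInt p m :=
    fun h => hndvd ((padicValInt_dvd_iff _ m).mpr (.inr h))
  omega

lemma not_nine_dvd_sq_sub_mul_add_sq {a x : ℤ} (hx : ¬ 3 ∣ x) :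
    ¬ 9 ∣ a ^ 2 - a * x + x ^ 2 := by
  intro h9
  -- Modulo 3 the form is the square (a + x)², so a ≡ -x; substituting a = 3t - x leaves 3x²
  -- modulo 9.
  have h3 : (3 : ℤ) ∣ (a + x) ^ 2 := by
    have hid : (a + x) ^ 2 = (a ^ 2 - a * x + x ^ 2) + 3 * (a * x) := by ring
    rw [hid]
    exact dvd_add (dvd_trans (by norm_num) h9) (dvd_mul_right _ _)
  obtain ⟨t, ht⟩ := Int.prime_three.dvd_of_dvd_pow h3
  have hid : a ^ 2 - a * x + x ^ 2 = 9 * (t ^ 2 - t * x) + 3 * x ^ 2 := by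
    rw [show a = 3 * t - x by omega]; ring
  rw [hid, dvd_add_right (dvd_mul_right _ _), show (9 : ℤ) = 3 * 3 by norm_num,
    mul_dvd_mul_iff_left three_ne_zero] at h9
  exact hx (Int.prime_three.dvd_of_dvd_pow h9)

theorem stmt_10_general (X B : ℤ) (hmod : X ≡ -B [ZMOD 3])
    (h3 : ¬ (3 : ℤ) ∣ X) :
    padicValInt 3 (7 * X ^ 2 - X * B + B ^ 2) = 2 ∨
      padicValInt 3 (7 * X ^ 2 - X * B + B ^ 2) = 3 := by
  obtain ⟨a, ha⟩ : (3 : ℤ) ∣ X + B := by have := hmod.dvd; omega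
  have hform : 7 * X ^ 2 - X * B + B ^ 2 = 3 ^ 2 * (a ^ 2 - a * X + X ^ 2) := by
    rw [show B = 3 * a - X by omega]; ring
  have : Fact (Nat.Prime 3) := ⟨Nat.prime_three⟩
  refine padicValInt_eq_or_eq_succ_of_dvd_of_not_dvd (p := 3) ?_ ?_
  · rw [hform]; exact dvd_mul_right _ _
  · rw [hform, pow_add, Nat.cast_ofNat, mul_dvd_mul_iff_left (by norm_num)]
    simpa using not_nine_dvd_sq_sub_mul_add_sq h3

theorem stmt_10 (X B : ℤ) (hco : IsCoprime X B) (hmod : X ≡ -B [ZMOD 3])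
    (h3 : ¬ (3 : ℤ) ∣ X) :
    padicValInt 3 (7 * X ^ 2 - X * B + B ^ 2) = 2 ∨
      padicValInt 3 (7 * X ^ 2 - X * B + B ^ 2) = 3 :=
  stmt_10_general X B hmod h3
end
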